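/- arXiv:math/0011093 — 2 statements merged into one kernel-verified Lean document; each statement's English description precedes it below -/
import Mathlib

section
/- Let {Z_j} be i.i.d. standard Gaussian random variables and σ_j > 0 with 1/σ_j² = 2 log j + 2 log log j (for j ≥ 2). Define W_1 = σ_1 Z_1, W_2 = -W_1, W_3 = σ_2 Z_2, W_4 = -W_3, etc. Then P( sup_{j≥1} W_j ≥ 1 ) = 1. -/
/-!
For `t < 1` the Gaussian tail `P(σ_k Z_k > t) ≥ (2π)^(-1/2) exp(-(t/σ_k + 1)²/2)` is eventually at
least a constant times `1/k`, because `1/σ_k² = 2 log k + o(log k)`; by the second Borel–Cantelli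
lemma `σ_k Z_k > t` infinitely often, almost surely, and letting `t ↑ 1` gives `sup W ≥ 1`.
The Chernoff bound `P(|σ_k Z_k| ≥ 2) ≤ 2 k⁻⁴` and the first Borel–Cantelli lemma make the
family almost surely bounded, which is needed since an unbounded real `⨆` is the junk value `0`.
-/

open MeasureTheory ProbabilityTheory Real Filter Set Topology

lemma gaussianReal_real_Ioi_ge {v : ℝ} (hv : 0 ≤ v) :
    (√(2 * π))⁻¹ * exp (-(v + 1) ^ 2 / 2) ≤ (gaussianReal 0 1).real (Ioi v) := by
  have hpdf : ∀ x ∈ Ioc v (v + 1),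
      (√(2 * π))⁻¹ * exp (-(v + 1) ^ 2 / 2) ≤ gaussianPDFReal 0 1 x := by
    intro x hx
    rw [gaussianPDFReal]
    have : x ^ 2 ≤ (v + 1) ^ 2 := by nlinarith [hx.1, hx.2]
    simp only [NNReal.coe_one, mul_one, sub_zero]
    gcongr
  calc (√(2 * π))⁻¹ * exp (-(v + 1) ^ 2 / 2)
      = (√(2 * π))⁻¹ * exp (-(v + 1) ^ 2 / 2) * volume.real (Ioc v (v + 1)) := by simp
    _ ≤ ∫ x in Ioc v (v + 1), gaussianPDFReal 0 1 x :=
      setIntegral_ge_of_const_le_real measurableSet_Ioc measure_Ioc_lt_top.ne hpdf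
        (integrable_gaussianPDFReal 0 1).integrableOn
    _ = (gaussianReal 0 1).real (Ioc v (v + 1)) := by
      rw [measureReal_def, gaussianReal_apply_eq_integral _ one_ne_zero,
        ENNReal.toReal_ofReal (setIntegral_nonneg measurableSet_Ioc
          fun x _ ↦ gaussianPDFReal_nonneg 0 1 x)]
    _ ≤ (gaussianReal 0 1).real (Ioi v) := measureReal_mono Ioc_subset_Ioi_self

lemma hasSubgaussianMGF_id_gaussianReal (v : NNReal) :
    HasSubgaussianMGF id v (gaussianReal 0 v) where
  integrable_exp_mul t := integrable_exp_mul_gaussianReal t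
  mgf_le t := by simp [mgf_id_gaussianReal]

section

variable {Ω : Type*} [MeasurableSpace Ω] {μ : Measure Ω}

lemma ProbabilityTheory.HasSubgaussianMGF.measureReal_abs_ge_le [IsFiniteMeasure μ] {X : Ω → ℝ}
    {c : NNReal} (h : HasSubgaussianMGF X c μ) {ε : ℝ} (hε : 0 ≤ ε) :
    μ.real {ω | ε ≤ |X ω|} ≤ 2 * exp (-ε ^ 2 / (2 * c)) := by
  have hsplit : {ω | ε ≤ |X ω|} = {ω | ε ≤ X ω} ∪ {ω | ε ≤ (-X) ω} := by
    ext ω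
    simp only [mem_ofPred_eq, mem_union, Pi.neg_apply, le_abs]
  rw [hsplit, two_mul]
  exact (measureReal_union_le _ _).trans
    (add_le_add (h.measure_ge_le hε) (h.neg.measure_ge_le hε))

lemma ae_eventually_notMem_of_summable_measureReal [IsFiniteMeasure μ] {s : ℕ → Set Ω}
    (h : Summable fun k ↦ μ.real (s k)) :
    ∀ᵐ ω ∂μ, ∀ᶠ k in atTop, ω ∉ s k :=
  ae_eventually_notMem <| by
    convert h.tsum_ofReal_ne_top with k
    exact (ofReal_measureReal).symm

lemma ae_frequently_mem_of_not_summable_measureReal {s : ℕ → Set Ω}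
    (hsm : ∀ k, MeasurableSet (s k)) (hind : iIndepSet s μ)
    (h : ¬Summable fun k ↦ μ.real (s k)) : ∀ᵐ ω ∂μ, ∃ᶠ k in atTop, ω ∈ s k := by
  have := hind.isProbabilityMeasure
  have hlimsup : μ (limsup s atTop) = 1 :=
    measure_limsup_eq_one hsm hind <| by
      by_contra hne
      exact h (ENNReal.summable_toReal hne)
  have hae : ∀ᵐ ω ∂μ, ω ∈ limsup s atTop :=
    (prob_compl_eq_zero_iff (MeasurableSet.measurableSet_limsup hsm)).2 hlimsup
  exact hae.mono fun ω ↦ mem_limsup_iff_frequently_mem.1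

lemma ProbabilityTheory.iIndepFun.iIndepSet_preimage {ι β : Type*} [MeasurableSpace β]
    {f : ι → Ω → β} (h : iIndepFun f μ) (hf : ∀ i, Measurable (f i)) {t : ι → Set β}
    (ht : ∀ i, MeasurableSet (t i)) : iIndepSet (fun i ↦ f i ⁻¹' t i) μ := by
  rw [iIndepSet_iff_meas_biInter fun i ↦ hf i (ht i)]
  exact fun S ↦ h.measure_inter_preimage_eq_mul S fun i _ ↦ ht i

end

section Growth

variable {σ : ℕ → ℝ}

lemma two_mul_log_le_one_div_sq
    (hσ : ∀ j : ℕ, 2 ≤ j → 1 / σ j ^ 2 = 2 * log j + 2 * log (log j)) {k : ℕ} (hk : 3 ≤ k) :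
    2 * log k ≤ 1 / σ k ^ 2 := by
  have hlog : 1 ≤ log k := by
    rw [le_log_iff_exp_le (by positivity)]
    have : (3 : ℝ) ≤ k := by exact_mod_cast hk
    linarith [exp_one_lt_d9]
  rw [hσ k (by omega)]
  linarith [log_nonneg hlog]

lemma eventually_sq_div_two_le_log (hσpos : ∀ j, 1 ≤ j → 0 < σ j)
    (hσ : ∀ j : ℕ, 2 ≤ j → 1 / σ j ^ 2 = 2 * log j + 2 * log (log j)) {t : ℝ} (ht0 : 0 ≤ t)
    (ht1 : t < 1) : ∀ᶠ k : ℕ in atTop, (t / σ k + 1) ^ 2 / 2 ≤ log k := by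
  obtain ⟨a, hta, ha1⟩ := exists_between ht1
  have ha0 : 0 < a := by linarith
  have hδ : 0 < a⁻¹ ^ 2 - 1 := by
    have : 1 < a⁻¹ := one_lt_inv_iff₀.2 ⟨ha0, ha1⟩
    nlinarith
  have hL : Tendsto (fun k : ℕ ↦ log k) atTop atTop :=
    tendsto_log_atTop.comp tendsto_natCast_atTop_atTop
  filter_upwards [hL.eventually (isLittleO_log_id_atTop.bound hδ),
    hL.eventually (eventually_ge_atTop (max 1 ((a - t)⁻¹ ^ 2 / 2))),
    eventually_ge_atTop 2] with k hloglog hLk hk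
  set x := (σ k)⁻¹
  have hx0 : 0 < x := inv_pos.2 (hσpos k (by omega))
  have hL1 : 1 ≤ log k := le_of_max_le_left hLk
  have hloglog0 : 0 ≤ log (log k) := log_nonneg hL1
  rw [norm_of_nonneg hloglog0, id, norm_of_nonneg (by linarith)] at hloglog
  have hx2 : x ^ 2 = 2 * log k + 2 * log (log k) := by rw [← hσ k hk, inv_pow, one_div]
  have hxa : (a - t)⁻¹ ≤ x := by
    refine le_of_sq_le_sq ?_ hx0.le
    nlinarith [le_of_max_le_right hLk]
  have hlin : t * x + 1 ≤ a * x := by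
    have := (inv_le_iff_one_le_mul₀ (by linarith)).1 hxa
    linarith
  calc (t / σ k + 1) ^ 2 / 2 = (t * x + 1) ^ 2 / 2 := by rw [div_eq_mul_inv t]
    _ ≤ (a * x) ^ 2 / 2 := by gcongr
    _ = a ^ 2 * (log k + log (log k)) := by rw [mul_pow, hx2]; ring
    _ ≤ a ^ 2 * (log k + (a⁻¹ ^ 2 - 1) * log k) := by gcongr
    _ = log k := by field_simp; ring

end Growth

section GaussianSequence

variable {Ω : Type*} [MeasurableSpace Ω] {μ : Measure Ω} {Z : ℕ → Ω → ℝ} {σ : ℕ → ℝ}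

lemma ae_eventually_abs_mul_lt_two [IsFiniteMeasure μ] (hZmeas : ∀ j, Measurable (Z j))
    (hZlaw : ∀ j, Measure.map (Z j) μ = gaussianReal 0 1)
    (hσ : ∀ j : ℕ, 2 ≤ j → 1 / σ j ^ 2 = 2 * log j + 2 * log (log j)) :
    ∀ᵐ ω ∂μ, ∀ᶠ k in atTop, |σ k * Z k ω| < 2 := by
  have hsub : ∀ k, HasSubgaussianMGF (fun ω ↦ σ k * Z k ω) (⟨σ k ^ 2, sq_nonneg _⟩ * 1) μ :=
    fun k ↦ ((HasSubgaussianMGF.id_map_iff (hZmeas k).aemeasurable).1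
      (hZlaw k ▸ hasSubgaussianMGF_id_gaussianReal 1)).const_mul (σ k)
  have hsum : Summable fun k ↦ μ.real {ω | 2 ≤ |σ k * Z k ω|} := by
    refine .of_norm_bounded_eventually_nat
      ((Real.summable_nat_pow_inv.2 (by norm_num : 1 < 4)).mul_left 2) ?_
    filter_upwards [eventually_ge_atTop 3] with k hk
    rw [norm_of_nonneg measureReal_nonneg]
    calc μ.real {ω | 2 ≤ |σ k * Z k ω|} ≤ 2 * exp (-2 ^ 2 / (2 * σ k ^ 2)) := by
          have : μ.real {ω | 2 ≤ |σ k * Z k ω|} ≤ 2 * exp (-2 ^ 2 / (2 * (σ k ^ 2 * 1))) :=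
            (hsub k).measureReal_abs_ge_le zero_le_two
          rwa [mul_one] at this
      _ ≤ 2 * exp (-(4 * log k)) := by
          have := two_mul_log_le_one_div_sq hσ hk
          gcongr
          rw [neg_div, neg_le_neg_iff]
          calc 4 * log k ≤ 2 * (1 / σ k ^ 2) := by linarith
            _ = 2 ^ 2 / (2 * σ k ^ 2) := by ring
      _ = 2 * ((k : ℝ) ^ 4)⁻¹ := by
          rw [exp_neg, show 4 * log k = log (k ^ 4) by rw [log_pow]; norm_num,
            exp_log (by positivity)]
  filter_upwards [ae_eventually_notMem_of_summable_measureReal hsum] with ω hω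
  exact hω.mono fun k hk ↦ not_le.1 hk

lemma ae_frequently_lt_mul (hZmeas : ∀ j, Measurable (Z j)) (hZindep : iIndepFun Z μ)
    (hZlaw : ∀ j, Measure.map (Z j) μ = gaussianReal 0 1) (hσpos : ∀ j, 1 ≤ j → 0 < σ j)
    (hσ : ∀ j : ℕ, 2 ≤ j → 1 / σ j ^ 2 = 2 * log j + 2 * log (log j)) {t : ℝ} (ht0 : 0 ≤ t)
    (ht1 : t < 1) : ∀ᵐ ω ∂μ, ∃ᶠ k in atTop, t < σ k * Z k ω := by
  have hmeas : ∀ k, MeasurableSet {x : ℝ | t < σ k * x} :=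
    fun k ↦ measurableSet_lt measurable_const (measurable_const_mul _)
  refine ae_frequently_mem_of_not_summable_measureReal (s := fun k ↦ Z k ⁻¹' {x | t < σ k * x})
    (fun k ↦ hZmeas k (hmeas k)) (hZindep.iIndepSet_preimage hZmeas hmeas)
    fun hsum ↦ Real.not_summable_one_div_natCast ?_
  refine .of_norm_bounded_eventually_nat (hsum.mul_left √(2 * π)) ?_
  filter_upwards [eventually_sq_div_two_le_log hσpos hσ ht0 ht1, eventually_ge_atTop 2]
    with k hexp hk
  have hσk : 0 < σ k := hσpos k (by omega)
  have hk0 : (0 : ℝ) < k := by positivity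
  have hset : {x : ℝ | t < σ k * x} = Ioi (t / σ k) := by
    ext x
    rw [mem_ofPred_eq, mem_Ioi, div_lt_iff₀' hσk]
  rw [norm_of_nonneg (by positivity), ← map_measureReal_apply (hZmeas k) (hmeas k), hZlaw k,
    hset]
  calc 1 / (k : ℝ) = √(2 * π) * ((√(2 * π))⁻¹ * exp (-log k)) := by
        rw [exp_neg, exp_log hk0]; field_simp
    _ ≤ √(2 * π) * ((√(2 * π))⁻¹ * exp (-(t / σ k + 1) ^ 2 / 2)) := by
        gcongr
        rw [neg_div, neg_le_neg_iff]
        exact hexp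
    _ ≤ √(2 * π) * (gaussianReal 0 1).real (Ioi (t / σ k)) := by
        gcongr
        exact gaussianReal_real_Ioi_ge (by positivity)

end GaussianSequence

lemma le_iSup_of_interleave {y w u : ℕ → ℝ} {a : ℝ} (hodd : ∀ k, w (2 * k + 1) = y (k + 1))
    (heven : ∀ k, w (2 * k + 2) = -y (k + 1)) (hy : BddAbove (range fun k ↦ |y k|))
    (hu : Tendsto u atTop (𝓝 a)) (hfreq : ∀ n, ∃ᶠ k in atTop, u n < y k) :
    a ≤ ⨆ j, ⨆ _ : 1 ≤ j, w j := by
  obtain ⟨M, hM⟩ := hy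
  rw [mem_upperBounds, forall_mem_range] at hM
  have hw : ∀ j, (⨆ _ : 1 ≤ j, w j) ≤ M := by
    intro j
    refine Real.iSup_le (fun hj ↦ ?_) ((abs_nonneg _).trans (hM 0))
    obtain ⟨k, rfl | rfl⟩ : ∃ k, j = 2 * k + 1 ∨ j = 2 * k + 2 := ⟨(j - 1) / 2, by omega⟩
    · rw [hodd k]
      exact (le_abs_self _).trans (hM _)
    · rw [heven k]
      exact (neg_le_abs _).trans (hM _)
  have hbdd : BddAbove (range fun j ↦ ⨆ _ : 1 ≤ j, w j) := ⟨M, forall_mem_range.2 hw⟩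
  refine le_of_tendsto' hu fun n ↦ ?_
  obtain ⟨k, hk, hk1⟩ := ((hfreq n).and_eventually (eventually_ge_atTop 1)).exists
  obtain ⟨m, rfl⟩ := Nat.exists_eq_add_of_le' hk1
  calc u n ≤ w (2 * m + 1) := hodd m ▸ hk.le
    _ = ⨆ _ : 1 ≤ 2 * m + 1, w (2 * m + 1) :=
      (ciSup_pos (f := fun _ ↦ w (2 * m + 1)) (by omega)).symm
    _ ≤ ⨆ j, ⨆ _ : 1 ≤ j, w j := le_ciSup hbdd _

/-- Marcus–Shepp example: interleaving `σ_k Z_k` with their negatives, the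
supremum of the resulting centered Gaussian sequence is at least 1 almost surely. -/
theorem marcus_shepp_sup_ge_one
    {Ω : Type*} [MeasurableSpace Ω] (μ : Measure Ω) [IsProbabilityMeasure μ]
    (Z : ℕ → Ω → ℝ) (hZmeas : ∀ j, Measurable (Z j))
    (hZindep : iIndepFun Z μ)
    (hZlaw : ∀ j, Measure.map (Z j) μ = gaussianReal 0 1)
    (σ : ℕ → ℝ) (hσpos : ∀ j, 1 ≤ j → 0 < σ j)
    (hσ : ∀ j : ℕ, 2 ≤ j →
      1 / (σ j) ^ 2 = 2 * Real.log j + 2 * Real.log (Real.log j))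
    (W : ℕ → Ω → ℝ)
    (hWodd : ∀ k : ℕ, W (2 * k + 1) = fun ω => σ (k + 1) * Z (k + 1) ω)
    (hWeven : ∀ k : ℕ, W (2 * k + 2) = fun ω => -(σ (k + 1) * Z (k + 1) ω)) :
    μ {ω | 1 ≤ ⨆ j, ⨆ _ : 1 ≤ j, W j ω} = 1 := by
  have hfreq : ∀ᵐ ω ∂μ, ∀ n : ℕ, ∃ᶠ k in atTop, (n : ℝ) / (n + 1) < σ k * Z k ω :=
    ae_all_iff.2 fun n ↦ ae_frequently_lt_mul hZmeas hZindep hZlaw hσpos hσ (by positivity)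
      ((div_lt_one (by positivity)).2 (lt_add_one _))
  have hsup : ∀ᵐ ω ∂μ, 1 ≤ ⨆ j, ⨆ _ : 1 ≤ j, W j ω := by
    filter_upwards [hfreq, ae_eventually_abs_mul_lt_two hZmeas hZlaw hσ] with ω hω hbdd
    exact le_iSup_of_interleave (fun k ↦ congrFun (hWodd k) ω) (fun k ↦ congrFun (hWeven k) ω)
      (isBoundedUnder_of_eventually_le (hbdd.mono fun _ ↦ le_of_lt)).bddAbove_range
      (tendsto_natCast_div_add_atTop 1) hω
  exact (measure_congr (ae_eq_univ.2 hsup)).trans measure_univ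
end

section
/- Every non-negative, non-decreasing, convex function g : ℝ → ℝ with g(-∞) = 0 can be approximated pointwise by functions in the closed positive linear (conic) hull of the family {g_t : t ∈ ℝ} where g_t(x) = (x − t)₊. -/
open MeasureTheory Real Filter Set

/-! On the grid `a k = k / n - n`, `0 ≤ k ≤ 2 n²`, give the hinge at `a k` the weight by which
the chord slope of `g` jumps at `a k`. On `[-n, n]` this hinge combination is the piecewise linear
interpolant of `g` minus `g (-n)`: convexity keeps the interpolant above `g`, monotonicity keeps
it below `g (x + 1 / n)`, and the weights are nonnegative because the chord slopes of a monotone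
convex function are nonnegative and increasing. Letting `n → ∞`, `g (-n) → 0` and the continuity
of the convex function `g` close the squeeze. -/

/-- `chordSlope g a (k + 1)` is the slope of the chord of `g` over `[a k, a (k + 1)]`; the index
`0` stands for the zero slope to the left of the first knot. -/
noncomputable def chordSlope (g : ℝ → ℝ) (a : ℕ → ℝ) : ℕ → ℝ
  | 0 => 0
  | k + 1 => slope g (a k) (a (k + 1))

noncomputable def hingeWeight (g : ℝ → ℝ) (a : ℕ → ℝ) (k : ℕ) : ℝ :=
  chordSlope g a (k + 1) - chordSlope g a k

noncomputable def hingeInterpolant (g : ℝ → ℝ) (a : ℕ → ℝ) (m : ℕ) (x : ℝ) : ℝ :=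
  ∑ k ∈ Finset.range m, hingeWeight g a k * max (x - a k) 0

lemma max_sub_zero_sub_max_sub_zero (x a b : ℝ) :
    max (x - a) 0 - max (x - b) 0 = min x b - min x a := by
  rcases le_total x a with h | h <;> rcases le_total x b with h' | h' <;>
    simp [h, h', sub_nonpos.2, sub_nonneg.2]

lemma sum_range_sub_mul_by_parts (σ φ : ℕ → ℝ) (m : ℕ) :
    ∑ k ∈ Finset.range m, (σ (k + 1) - σ k) * φ k =
      σ m * φ m - σ 0 * φ 0 + ∑ k ∈ Finset.range m, σ (k + 1) * (φ k - φ (k + 1)) := by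
  induction m with
  | zero => simp
  | succ m ih => rw [Finset.sum_range_succ, ih, Finset.sum_range_succ]; ring

section

variable {g : ℝ → ℝ}

lemma hingeWeight_nonneg (hmono : Monotone g) (hconv : ConvexOn ℝ univ g) {a : ℕ → ℝ}
    (ha : StrictMono a) (k : ℕ) : 0 ≤ hingeWeight g a k := by
  cases k with
  | zero =>
    simpa [hingeWeight, chordSlope] using (hmono.monotoneOn univ).slope_nonneg trivial trivial
  | succ k =>
    rw [hingeWeight, sub_nonneg]
    simp only [chordSlope, slope_def_field]
    exact hconv.slope_mono_adjacent trivial trivial (ha k.lt_succ_self)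
      (ha (k + 1).lt_succ_self)

/-- Summation by parts turns the hinge sum into the piecewise linear interpolant of `g`, written
as a sum of chord increments. -/
lemma hingeInterpolant_eq_sum_slope_mul (a : ℕ → ℝ) {m : ℕ} {x : ℝ} (hx : x ≤ a m) :
    hingeInterpolant g a m x =
      ∑ k ∈ Finset.range m, slope g (a k) (a (k + 1)) * (min x (a (k + 1)) - min x (a k)) := by
  rw [hingeInterpolant]
  simp only [hingeWeight]
  rw [sum_range_sub_mul_by_parts]
  simp [chordSlope, max_eq_right (sub_nonpos.2 hx), max_sub_zero_sub_max_sub_zero]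

lemma ConvexOn.sub_le_slope_mul_min_sub_min (hconv : ConvexOn ℝ univ g) {a b : ℝ} (hab : a ≤ b)
    (x : ℝ) : g (min x b) - g (min x a) ≤ slope g a b * (min x b - min x a) := by
  rcases le_total x a with hxa | hax
  · simp [min_eq_left hxa, min_eq_left (hxa.trans hab)]
  rw [min_eq_right hax]
  rcases (le_min hax hab).eq_or_lt with h | h
  · simp [← h]
  have hslope : slope g a (min x b) ≤ slope g a b :=
    hconv.slope_mono trivial ⟨trivial, h.ne'⟩ ⟨trivial, (h.trans_le (min_le_right x b)).ne'⟩
      (min_le_right x b)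
  calc g (min x b) - g a = slope g a (min x b) * (min x b - a) := by
        rw [slope_def_field]; field_simp [sub_ne_zero.2 h.ne']
    _ ≤ _ := mul_le_mul_of_nonneg_right hslope (by linarith)

lemma Monotone.slope_mul_min_sub_min_le (hmono : Monotone g) {a b h : ℝ} (hab : a ≤ b)
    (hh : b - a ≤ h) (x : ℝ) :
    slope g a b * (min x b - min x a) ≤ g (min (x + h) b) - g (min (x + h) a) := by
  rcases le_total x a with hxa | hax
  · simpa [min_eq_left hxa, min_eq_left (hxa.trans hab)] using hmono (min_le_min_left (x + h) hab)
  rw [min_eq_right hax, min_eq_right (by linarith : b ≤ x + h),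
    min_eq_right (by linarith : a ≤ x + h)]
  calc slope g a b * (min x b - a) ≤ slope g a b * (b - a) :=
        mul_le_mul_of_nonneg_left (by linarith [min_le_right x b])
          ((hmono.monotoneOn univ).slope_nonneg trivial trivial)
    _ = g b - g a := by rw [mul_comm, ← smul_eq_mul, sub_smul_slope, vsub_eq_sub]

variable {a : ℕ → ℝ} {m : ℕ} {x : ℝ}

lemma sub_le_hingeInterpolant (hconv : ConvexOn ℝ univ g) (ha : Monotone a) (h0 : a 0 ≤ x)
    (hm : x ≤ a m) : g x - g (a 0) ≤ hingeInterpolant g a m x := by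
  rw [hingeInterpolant_eq_sum_slope_mul a hm]
  calc g x - g (a 0) = ∑ k ∈ Finset.range m, (g (min x (a (k + 1))) - g (min x (a k))) := by
        rw [Finset.sum_range_sub (fun k => g (min x (a k))), min_eq_left hm, min_eq_right h0]
    _ ≤ _ := Finset.sum_le_sum fun k _ => hconv.sub_le_slope_mul_min_sub_min (ha k.le_succ) x

lemma hingeInterpolant_le (hmono : Monotone g) (ha : Monotone a) {h : ℝ}
    (hh : ∀ k, a (k + 1) - a k ≤ h) (h0 : a 0 ≤ x) (hm : x ≤ a m) :
    hingeInterpolant g a m x ≤ g (x + h) - g (a 0) := by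
  have hx0 : a 0 ≤ x + h := by linarith [hh 0, ha (Nat.zero_le 1)]
  rw [hingeInterpolant_eq_sum_slope_mul a hm]
  calc _ ≤ ∑ k ∈ Finset.range m, (g (min (x + h) (a (k + 1))) - g (min (x + h) (a k))) :=
        Finset.sum_le_sum fun k _ => hmono.slope_mul_min_sub_min_le (ha k.le_succ) (hh k) x
    _ = g (min (x + h) (a m)) - g (a 0) := by
        rw [Finset.sum_range_sub (fun k => g (min (x + h) (a k))), min_eq_right hx0]
    _ ≤ g (x + h) - g (a 0) := by gcongr; exact hmono (min_le_left _ _)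

end

noncomputable def uniformGrid (n k : ℕ) : ℝ := k / n - n

lemma uniformGrid_succ_sub (n k : ℕ) :
    uniformGrid n (k + 1) - uniformGrid n k = (n : ℝ)⁻¹ := by
  simp only [uniformGrid]; push_cast; ring

lemma strictMono_uniformGrid {n : ℕ} (hn : 0 < n) : StrictMono (uniformGrid n) :=
  strictMono_nat_of_lt_succ fun k =>
    sub_pos.1 <| (uniformGrid_succ_sub n k).symm ▸ inv_pos.2 (Nat.cast_pos.2 hn)

lemma uniformGrid_zero (n : ℕ) : uniformGrid n 0 = -n := by simp [uniformGrid]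

lemma uniformGrid_two_mul_sq {n : ℕ} (hn : 0 < n) : uniformGrid n (2 * n ^ 2) = n := by
  have : (n : ℝ) ≠ 0 := by positivity
  simp only [uniformGrid]; push_cast; field_simp; ring

lemma hingeInterpolant_uniformGrid_mem_Icc {g : ℝ → ℝ} (hmono : Monotone g)
    (hconv : ConvexOn ℝ univ g) {n : ℕ} (hn : 0 < n) {x : ℝ} (hx : |x| ≤ n) :
    hingeInterpolant g (uniformGrid n) (2 * n ^ 2) x ∈
      Icc (g x - g (-n)) (g (x + (n : ℝ)⁻¹) - g (-n)) := by
  have ha := (strictMono_uniformGrid hn).monotone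
  have h0 : uniformGrid n 0 ≤ x := by rw [uniformGrid_zero]; exact neg_le_of_abs_le hx
  have hm : x ≤ uniformGrid n (2 * n ^ 2) := by
    rw [uniformGrid_two_mul_sq hn]; exact le_of_abs_le hx
  rw [← uniformGrid_zero]
  exact ⟨sub_le_hingeInterpolant hconv ha h0 hm,
    hingeInterpolant_le hmono ha (fun k => (uniformGrid_succ_sub n k).le) h0 hm⟩

theorem hinge_conic_hull_dense_general
    (g : ℝ → ℝ) (hg_mono : Monotone g)
    (hg_conv : ConvexOn ℝ univ g) (hg_bot : Tendsto g atBot (nhds 0)) :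
    ∃ f : ℕ → ℝ → ℝ,
      (∀ n, ∃ (m : ℕ) (c : Fin m → ℝ) (t : Fin m → ℝ),
        (∀ k, 0 ≤ c k) ∧ f n = fun x => ∑ k, c k * max (x - t k) 0) ∧
      ∀ x, Tendsto (fun n => f n x) atTop (nhds (g x)) := by
  refine ⟨fun n => hingeInterpolant g (uniformGrid n) (2 * n ^ 2), fun n => ⟨2 * n ^ 2,
    fun k => hingeWeight g (uniformGrid n) k, fun k => uniformGrid n k, ?_, ?_⟩, fun x => ?_⟩
  · rcases n.eq_zero_or_pos with rfl | hn
    · exact fun k => k.elim0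
    · exact fun k => hingeWeight_nonneg hg_mono hg_conv (strictMono_uniformGrid hn) k
  · funext x
    exact (Fin.sum_univ_eq_sum_range (fun k => _ * max (x - uniformGrid n k) 0) _).symm
  have hg_neg : Tendsto (fun n : ℕ => g (-n)) atTop (nhds 0) :=
    hg_bot.comp (tendsto_neg_atTop_atBot.comp tendsto_natCast_atTop_atTop)
  have hg_shift : Tendsto (fun n : ℕ => g (x + (n : ℝ)⁻¹)) atTop (nhds (g x)) := by
    have hcont := continuousOn_univ.mp (hg_conv.continuousOn isOpen_univ)
    have hshift : Tendsto (fun n : ℕ => x + (n : ℝ)⁻¹) atTop (nhds x) := by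
      simpa using (tendsto_const_nhds (x := x)).add (tendsto_inv_atTop_nhds_zero_nat (𝕜 := ℝ))
    exact (hcont.tendsto x).comp hshift
  have hbounds : ∀ᶠ n : ℕ in atTop, hingeInterpolant g (uniformGrid n) (2 * n ^ 2) x ∈
      Icc (g x - g (-n)) (g (x + (n : ℝ)⁻¹) - g (-n)) := by
    filter_upwards [eventually_gt_atTop 0, tendsto_natCast_atTop_atTop.eventually_ge_atTop |x|]
      with n hn hxn
    exact hingeInterpolant_uniformGrid_mem_Icc hg_mono hg_conv hn hxn
  exact tendsto_of_tendsto_of_tendsto_of_le_of_le' (by simpa using tendsto_const_nhds.sub hg_neg)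
    (by simpa using hg_shift.sub hg_neg) (hbounds.mono fun _ h => h.1)
    (hbounds.mono fun _ h => h.2)

/-- Every nonnegative, nondecreasing, convex function on ℝ vanishing at `-∞`
is a pointwise limit of nonnegative linear combinations of the hinge functions
`x ↦ (x - t)₊`. -/
theorem hinge_conic_hull_dense
    (g : ℝ → ℝ) (hg_nonneg : ∀ x, 0 ≤ g x) (hg_mono : Monotone g)
    (hg_conv : ConvexOn ℝ univ g) (hg_bot : Tendsto g atBot (nhds 0)) :
    ∃ f : ℕ → ℝ → ℝ,
      (∀ n, ∃ (m : ℕ) (c : Fin m → ℝ) (t : Fin m → ℝ),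
        (∀ k, 0 ≤ c k) ∧ f n = fun x => ∑ k, c k * max (x - t k) 0) ∧
      ∀ x, Tendsto (fun n => f n x) atTop (nhds (g x)) :=
  hinge_conic_hull_dense_general g hg_mono hg_conv hg_bot
end
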